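/- Let z₀ ∈ ℂ, θ ∈ ℝ, 0 < c₂ t, and let r̃ be a real-valued function harmonic on {τ ∈ ℂ : |τ| > 1+ε} and continuous up to the boundary circle {|τ| = 1+ε}, vanishing at infinity in an appropriate sense, with ε > 0, t > 0, ε = t². Suppose there is a constant C with |r̃(τ)| ≤ C |τ − w_ε|²/t² for τ on the circle |τ| = 1+ε with |τ − w_ε| ≤ c₂ t, and |r̃(τ)| ≤ C for all τ with |τ| = 1+ε, where w_ε = (1+ε)e^{iθ}. Then for w = r e^{iθ} with 1+ε < r < 1+2ε, one has |r̃(w)| ≤ C' t for a constant C' depending only on C and c₂ (and not on ε, t, θ). -/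

import Mathlib

/-!
Write `s = sin ((θ - η) / 2)`. The kernel is `(r² - (1+ε)²) / ((r - 1 - ε)² + 4 r (1+ε) s²)`, so
`P s² ≤ ε / 2 = t² / 2`. For `t ≤ 1` this makes `b P` bounded: near `θ` because `|b| ≲ s² / t²`
there, away from `θ` because `s ≳ t` there. Together with `|b| P s² ≲ t²` this gives
`|b P| ≲ t² / (t² + s²)`, and by Jordan's inequality `sin² (φ / 2) ≥ (φ / π)²` the integral of
the latter over a period is `≲ t`. For `t > 1` the same estimate, at width
`(r - 1 - ε) / (2 (1 + ε))` instead of `t`, bounds the mass of the kernel, so `|r̃| ≲ C ≤ C t`.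
-/

open Real MeasureTheory

/-- The Poisson kernel for the exterior of the circle of radius `1+ε`:
`P(re^{iθ}, (1+ε)e^{iη}) = (r² - (1+ε)²)/(r² - 2r(1+ε)cos(θ-η) + (1+ε)²)`. -/
noncomputable def extPoisson (ε r θ η : ℝ) : ℝ :=
  (r ^ 2 - (1 + ε) ^ 2) /
    (r ^ 2 - 2 * r * (1 + ε) * Real.cos (θ - η) + (1 + ε) ^ 2)

lemma norm_mul_exp_sub_mul_exp {R : ℝ} (hR : 0 ≤ R) (η θ : ℝ) :
    ‖(R : ℂ) * Complex.exp (η * Complex.I) - R * Complex.exp (θ * Complex.I)‖ =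
      2 * R * |sin ((θ - η) / 2)| := by
  have hexp : Complex.exp (η * Complex.I) * Complex.exp (Complex.I * ↑(θ - η)) =
      Complex.exp (θ * Complex.I) := by
    rw [← Complex.exp_add]; push_cast; ring_nf
  rw [norm_sub_rev, show (R : ℂ) * Complex.exp (θ * Complex.I) - R * Complex.exp (η * Complex.I) =
      R * Complex.exp (η * Complex.I) * (Complex.exp (Complex.I * ↑(θ - η)) - 1) by
    linear_combination -(R : ℂ) * hexp, norm_mul, norm_mul, Complex.norm_exp_ofReal_mul_I,
    Complex.norm_exp_I_mul_ofReal_sub_one, Complex.norm_real, norm_mul, Real.norm_eq_abs,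
    Real.norm_eq_abs, Real.norm_eq_abs, abs_of_nonneg hR, abs_two]
  ring

theorem Function.Periodic.intervalIntegral_comp_sub_eq {E : Type*} [NormedAddCommGroup E]
    [NormedSpace ℝ E] {g : ℝ → E} {T : ℝ} (hg : g.Periodic T) (θ a : ℝ) :
    ∫ η in (0 : ℝ)..T, g (θ - η) = ∫ φ in a..a + T, g φ := by
  rw [intervalIntegral.integral_comp_sub_left, sub_zero, ← hg.intervalIntegral_add_eq (θ - T) a,
    sub_add_cancel]

lemma integral_div_sq_add_sin_half_sq_le {a u : ℝ} (ha : 0 ≤ a) (hu : 0 < u) :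
    ∫ φ in -π..π, a / (u ^ 2 + sin (φ / 2) ^ 2) ≤ a * π ^ 2 / u := by
  have hπu : π * u ≠ 0 := by positivity
  calc ∫ φ in -π..π, a / (u ^ 2 + sin (φ / 2) ^ 2)
      ≤ ∫ φ in -π..π, a * π ^ 2 * ((π * u) ^ 2 + φ ^ 2)⁻¹ := by
        refine intervalIntegral.integral_mono_on (by linarith [pi_pos]) ?_ ?_ fun φ hφ => ?_
        · exact (continuous_const.div (by fun_prop) fun φ => by positivity).intervalIntegrable _ _
        · exact (continuous_const.mul
            ((by fun_prop : Continuous fun φ : ℝ => (π * u) ^ 2 + φ ^ 2).inv₀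
              fun φ => by positivity)).intervalIntegrable _ _
        have hjordan : 2 / π * |φ / 2| ≤ |sin (φ / 2)| :=
          mul_abs_le_abs_sin (by rw [abs_div, abs_two]; linarith [abs_le.2 hφ])
        have hsq : φ ^ 2 ≤ π ^ 2 * sin (φ / 2) ^ 2 := by
          rw [← sq_abs φ, ← sq_abs (sin _), ← mul_pow]
          refine pow_le_pow_left₀ (abs_nonneg _) ?_ 2
          rw [abs_div, abs_two] at hjordan
          calc |φ| = π * (2 / π * (|φ| / 2)) := by field_simp
            _ ≤ π * |sin (φ / 2)| := by gcongr
        rw [← div_eq_mul_inv, div_le_div_iff₀ (by positivity) (by positivity)]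
        nlinarith [mul_nonneg ha (sq_nonneg u)]
    _ = a * π ^ 2 / (π * u) * (2 * arctan (1 / u)) := by
        rw [intervalIntegral.integral_const_mul, integral_inv_sq_add_sq hπu,
          neg_div, arctan_neg, show π / (π * u) = 1 / u by field_simp]
        ring
    _ ≤ a * π ^ 2 / (π * u) * π := by
        gcongr; linarith [arctan_lt_pi_div_two (1 / u)]
    _ = a * π ^ 2 / u := by field_simp

lemma abs_integral_le_of_abs_le_div_sq_add_sin_sq {f : ℝ → ℝ} {a u θ : ℝ} (ha : 0 ≤ a)
    (hu : 0 < u) (hf : ∀ η, |f η| ≤ a / (u ^ 2 + sin ((θ - η) / 2) ^ 2)) :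
    |∫ η in (0 : ℝ)..2 * π, f η| ≤ a * π ^ 2 / u := by
  have hper : (fun φ => a / (u ^ 2 + sin (φ / 2) ^ 2)).Periodic (2 * π) := fun φ => by
    simp only [add_div, mul_div_cancel_left₀ π two_ne_zero, sin_add_pi, neg_sq]
  calc |∫ η in (0 : ℝ)..2 * π, f η|
      ≤ ∫ η in (0 : ℝ)..2 * π, a / (u ^ 2 + sin ((θ - η) / 2) ^ 2) := by
        refine intervalIntegral.norm_integral_le_of_norm_le (f := f)
          (g := fun η => a / (u ^ 2 + sin ((θ - η) / 2) ^ 2)) two_pi_pos.le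
          (.of_forall fun η _ => hf η) (Continuous.intervalIntegrable ?_ _ _)
        exact continuous_const.div (by fun_prop) fun η => by positivity
    _ = ∫ φ in -π..π, a / (u ^ 2 + sin (φ / 2) ^ 2) := by
        rw [hper.intervalIntegral_comp_sub_eq θ (-π), show -π + 2 * π = π by ring]
    _ ≤ a * π ^ 2 / u := integral_div_sq_add_sin_half_sq_le ha hu

lemma extPoisson_eq (ε r θ η : ℝ) :
    extPoisson ε r θ η =
      (r ^ 2 - (1 + ε) ^ 2) / ((r - (1 + ε)) ^ 2 + 4 * r * (1 + ε) * sin ((θ - η) / 2) ^ 2) := by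
  rw [extPoisson, sin_sq_eq_half_sub, show 2 * ((θ - η) / 2) = θ - η by ring]
  ring_nf

section ExtPoisson

variable {ε r : ℝ} (hR : 0 < 1 + ε) (hr : 1 + ε < r)
include hR hr

lemma extPoisson_denom_pos (x : ℝ) : 0 < (r - (1 + ε)) ^ 2 + 4 * r * (1 + ε) * x ^ 2 :=
  add_pos_of_pos_of_nonneg (pow_pos (by linarith) 2)
    (mul_nonneg (mul_nonneg (by linarith) hR.le) (sq_nonneg x))

lemma extPoisson_pos (θ η : ℝ) : 0 < extPoisson ε r θ η := by
  rw [extPoisson_eq]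
  exact div_pos (by nlinarith) (extPoisson_denom_pos hR hr _)

lemma extPoisson_mul_sin_sq_le (θ η : ℝ) :
    extPoisson ε r θ η * sin ((θ - η) / 2) ^ 2 ≤ (r - (1 + ε)) / (2 * (1 + ε)) := by
  have hd : 0 < r - (1 + ε) := by linarith
  rw [extPoisson_eq, div_mul_eq_mul_div,
    div_le_div_iff₀ (extPoisson_denom_pos hR hr _) (by positivity)]
  nlinarith [mul_nonneg (mul_nonneg hd.le hR.le) (sq_nonneg (sin ((θ - η) / 2))),
    mul_nonneg (mul_nonneg hd.le hd.le) (mul_nonneg hd.le hR.le)]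

lemma extPoisson_le (θ η : ℝ) :
    extPoisson ε r θ η ≤
      (r ^ 2 - (1 + ε) ^ 2) / (4 * (1 + ε) ^ 2) /
        (((r - (1 + ε)) / (2 * (1 + ε))) ^ 2 + sin ((θ - η) / 2) ^ 2) := by
  have hd : 0 < r - (1 + ε) := by linarith
  rw [extPoisson_eq, div_div]
  refine div_le_div_of_nonneg_left (by nlinarith) (by positivity) ?_
  field_simp
  nlinarith [mul_nonneg (mul_nonneg hR.le hd.le) (sq_nonneg (sin ((θ - η) / 2)))]

lemma abs_integral_mul_extPoisson_le {b : ℝ → ℝ} {C : ℝ} (hr₂ : r ≤ 2 * (1 + ε))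
    (hb : ∀ η, |b η| ≤ C) (θ : ℝ) :
    |∫ η in (0 : ℝ)..2 * π, b η * extPoisson ε r θ η| ≤ 3 * π ^ 2 * C / 2 := by
  have hd : 0 < r - (1 + ε) := by linarith
  have hC : 0 ≤ C := (abs_nonneg _).trans (hb 0)
  refine (abs_integral_le_of_abs_le_div_sq_add_sin_sq (θ := θ)
    (a := C * ((r ^ 2 - (1 + ε) ^ 2) / (4 * (1 + ε) ^ 2))) (u := (r - (1 + ε)) / (2 * (1 + ε)))
    (mul_nonneg hC (div_nonneg (by nlinarith) (by positivity))) (div_pos hd (by positivity))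
    fun η => ?_).trans ?_
  · rw [abs_mul, abs_of_pos (extPoisson_pos hR hr θ η), mul_div_assoc]
    exact mul_le_mul (hb η) (extPoisson_le hR hr θ η) (extPoisson_pos hR hr θ η).le hC
  · rw [div_le_div_iff₀ (by positivity) two_pos]
    field_simp
    nlinarith [mul_nonneg (mul_nonneg hC hd.le) (sub_nonneg.2 hr₂)]

end ExtPoisson

lemma abs_mul_le_of_near_far {β P s t R C c₂ : ℝ} (hc₂ : 0 < c₂) (ht : 0 < t) (hR₀ : 0 ≤ R)
    (hR : R ≤ 2) (hP : 0 ≤ P) (hPs : P * s ^ 2 ≤ t ^ 2 / 2)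
    (hnear : 2 * R * |s| ≤ c₂ * t → |β| ≤ C * (2 * R * |s|) ^ 2 / t ^ 2) (hβ : |β| ≤ C) :
    |β| * P ≤ 8 * C + 8 * C / c₂ ^ 2 := by
  have hC : 0 ≤ C := (abs_nonneg β).trans hβ
  have hCc₂ : 0 ≤ 8 * C / c₂ ^ 2 := by positivity
  by_cases hclose : 2 * R * |s| ≤ c₂ * t
  · have hβs : |β| * t ^ 2 ≤ 4 * C * R ^ 2 * s ^ 2 := by
      have := hnear hclose
      rw [le_div_iff₀ (by positivity), mul_pow, mul_pow, sq_abs] at this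
      linarith
    have hR2 : R ^ 2 ≤ 4 := by nlinarith
    have : |β| * P * t ^ 2 ≤ 8 * C * t ^ 2 := by
      calc |β| * P * t ^ 2 = |β| * t ^ 2 * P := by ring
        _ ≤ 4 * C * R ^ 2 * (P * s ^ 2) := by nlinarith
        _ ≤ 4 * C * 4 * (t ^ 2 / 2) := by gcongr
        _ = 8 * C * t ^ 2 := by ring
    linarith [le_of_mul_le_mul_right this (by positivity)]
  · have hs : (c₂ * t) ^ 2 ≤ 16 * s ^ 2 := by
      have : c₂ * t ≤ 4 * |s| := by nlinarith [abs_nonneg s]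
      calc (c₂ * t) ^ 2 ≤ (4 * |s|) ^ 2 := pow_le_pow_left₀ (by positivity) this 2
        _ = 16 * s ^ 2 := by rw [mul_pow, sq_abs]; norm_num
    have hP' : P ≤ 8 / c₂ ^ 2 := by
      rw [le_div_iff₀ (by positivity)]
      refine le_of_mul_le_mul_right ?_ (pow_pos ht 2)
      nlinarith
    calc |β| * P ≤ C * (8 / c₂ ^ 2) := mul_le_mul hβ hP' hP hC
      _ ≤ 8 * C + 8 * C / c₂ ^ 2 := by rw [mul_div_assoc', mul_comm C]; linarith

lemma abs_mul_extPoisson_le_of_le_one {β C c₂ t ε r θ η : ℝ} (hc₂ : 0 < c₂) (ht : 0 < t)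
    (ht₁ : t ≤ 1) (hε : ε = t ^ 2) (hr : 1 + ε < r) (hr₂ : r < 1 + 2 * ε)
    (hnear : ‖(1 + ε) * Complex.exp (η * Complex.I) - (1 + ε) * Complex.exp (θ * Complex.I)‖ ≤
        c₂ * t →
      |β| ≤ C * ‖(1 + ε) * Complex.exp (η * Complex.I) -
        (1 + ε) * Complex.exp (θ * Complex.I)‖ ^ 2 / t ^ 2)
    (hβ : |β| ≤ C) :
    |β * extPoisson ε r θ η| ≤
      2 * (8 * C + 8 * C / c₂ ^ 2) * t ^ 2 / (t ^ 2 + sin ((θ - η) / 2) ^ 2) := by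
  have hR : 0 < 1 + ε := by rw [hε]; positivity
  have hP := extPoisson_pos hR hr θ η
  have hPs : extPoisson ε r θ η * sin ((θ - η) / 2) ^ 2 ≤ t ^ 2 / 2 :=
    (extPoisson_mul_sin_sq_le hR hr θ η).trans <| by
      rw [div_le_div_iff₀ (by positivity) two_pos]; nlinarith
  have hchord := norm_mul_exp_sub_mul_exp hR.le η θ
  push_cast at hchord
  have hM := abs_mul_le_of_near_far hc₂ ht hR.le (by nlinarith) hP.le hPs
    (by simpa only [hchord] using hnear) hβ
  have hMs : |β| * extPoisson ε r θ η * sin ((θ - η) / 2) ^ 2 ≤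
      (8 * C + 8 * C / c₂ ^ 2) * t ^ 2 := by
    have hC : 0 ≤ C := (abs_nonneg β).trans hβ
    have : 0 ≤ 8 * C / c₂ ^ 2 := by positivity
    calc |β| * extPoisson ε r θ η * sin ((θ - η) / 2) ^ 2
        = |β| * (extPoisson ε r θ η * sin ((θ - η) / 2) ^ 2) := by ring
      _ ≤ C * (t ^ 2 / 2) := by gcongr
      _ ≤ (8 * C + 8 * C / c₂ ^ 2) * t ^ 2 := by nlinarith
  rw [abs_mul, abs_of_pos hP, le_div_iff₀ (by positivity)]
  nlinarith

/-- Let `ε = t²` with `t > 0`, and let `r̃` be the harmonic function on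
`{|τ| > 1+ε}` obtained as Poisson extension of continuous boundary values
`b(η) = r̃((1+ε)e^{iη})`.  If `|b(η)| ≤ C |(1+ε)e^{iη} - w_ε|²/t²` whenever
`|(1+ε)e^{iη} - w_ε| ≤ c₂ t` (where `w_ε = (1+ε)e^{iθ}`) and `|b(η)| ≤ C` for all `η`,
then `|r̃(re^{iθ})| ≤ C' t` for `1+ε < r < 1+2ε`, where `C'` depends only on `C` and `c₂`. -/
theorem stmt7 (C c₂ : ℝ) (hC : 0 < C) (hc₂ : 0 < c₂) :
    ∃ C' : ℝ, 0 < C' ∧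
      ∀ (t ε θ : ℝ) (b : ℝ → ℝ), 0 < t → ε = t ^ 2 → Continuous b →
        (∀ η : ℝ,
          ‖(1 + ε) * Complex.exp (η * Complex.I) -
              (1 + ε) * Complex.exp (θ * Complex.I)‖ ≤ c₂ * t →
          |b η| ≤ C * ‖(1 + ε) * Complex.exp (η * Complex.I) -
              (1 + ε) * Complex.exp (θ * Complex.I)‖ ^ 2 / t ^ 2) →
        (∀ η : ℝ, |b η| ≤ C) →
        ∀ r : ℝ, 1 + ε < r → r < 1 + 2 * ε →
          |(1 / (2 * π)) * ∫ η in (0:ℝ)..(2 * π), b η * extPoisson ε r θ η| ≤ C' * t := by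
  set M := 8 * C + 8 * C / c₂ ^ 2
  refine ⟨π * M, by positivity, fun t ε θ b ht hε _ hnear hbdd r hr hr₂ => ?_⟩
  have hε₀ : 0 < ε := hε ▸ pow_pos ht 2
  have hR : 0 < 1 + ε := by linarith
  rw [abs_mul, abs_of_pos (by positivity)]
  rcases le_or_gt t 1 with ht₁ | ht₁
  · calc 1 / (2 * π) * |∫ η in (0 : ℝ)..2 * π, b η * extPoisson ε r θ η|
        ≤ 1 / (2 * π) * (2 * M * t ^ 2 * π ^ 2 / t) := by
          gcongr
          exact abs_integral_le_of_abs_le_div_sq_add_sin_sq (by positivity) ht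
            fun η => abs_mul_extPoisson_le_of_le_one hc₂ ht ht₁ hε hr hr₂ (hnear η) (hbdd η)
      _ = π * M * t := by field_simp
  · calc 1 / (2 * π) * |∫ η in (0 : ℝ)..2 * π, b η * extPoisson ε r θ η|
        ≤ 1 / (2 * π) * (3 * π ^ 2 * C / 2) := by
          gcongr
          exact abs_integral_mul_extPoisson_le hR hr (by linarith) hbdd θ
      _ = π * (3 * C / 4) := by field_simp; ring
      _ ≤ π * M * t := by
          have : 0 ≤ 8 * C / c₂ ^ 2 := by positivity
          rw [mul_assoc]
          gcongr
          nlinarith
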